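/- Let ℓ : ℝ → [0,∞) be convex, differentiable, with ℓ(z) → 0 as z → −∞, ℓ(0) > 0, and let g := ℓ'(0) > 0. Then the restriction of the Fenchel conjugate ℓ* to [0, g] is a strictly decreasing bijection from [0, g] onto [−ℓ(0), 0]. -/

import Mathlib

/-!
For `φ ∈ [0, ℓ'(0)]` the affine functions `φ ↦ φ x - ℓ x` are bounded above by `0` (tangent line
at `0` for `x ≥ 0`, `ℓ ≥ 0` for `x ≤ 0`), so `ℓ*` is finite, convex and lower semicontinuous
there; a convex lower semicontinuous function on a closed interval is continuous. The endpoint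
values are `ℓ*(0) = -inf ℓ = 0` and `ℓ*(ℓ'(0)) = -ℓ(0)` (Fenchel–Young). For `φ < ℓ'(0)` a point
slightly left of `0` beats `-ℓ(0)`, so `ℓ'(0)` is the strict minimiser of `ℓ*`; by convexity `ℓ*`
is then strictly decreasing, and the intermediate value theorem gives surjectivity.
-/

open Set Filter Topology

theorem ConvexOn.strictAntiOn_Icc_of_right_lt {𝕜 β : Type*} [Field 𝕜] [LinearOrder 𝕜]
    [IsStrictOrderedRing 𝕜] [AddCommMonoid β] [LinearOrder β] [IsOrderedCancelAddMonoid β]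
    [Module 𝕜 β] [PosSMulStrictMono 𝕜 β] {f : 𝕜 → β} {a b : 𝕜}
    (hf : ConvexOn 𝕜 (Icc a b) f) (hb : ∀ x ∈ Ico a b, f b < f x) :
    StrictAntiOn f (Icc a b) := by
  intro x hx y hy hxy
  rcases hy.2.eq_or_lt with rfl | hyb
  · exact hb x ⟨hx.1, hxy⟩
  · refine hf.lt_left_of_right_lt hx (right_mem_Icc.2 (hx.1.trans (hxy.le.trans hy.2))) ?_
      (hb y ⟨hy.1, hyb⟩)
    rw [openSegment_eq_Ioo (hxy.trans hyb)]
    exact ⟨hxy, hyb⟩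

theorem ConvexOn.le_chord {f : ℝ → ℝ} {a b x : ℝ} (hf : ConvexOn ℝ (Icc a b) f) (hab : a < b)
    (hx : x ∈ Icc a b) : f x ≤ f a + (f b - f a) / (b - a) * (x - a) := by
  have hba : 0 < b - a := sub_pos.2 hab
  have h := hf.2 (left_mem_Icc.2 hab.le) (right_mem_Icc.2 hab.le)
    (div_nonneg (sub_nonneg.2 hx.2) hba.le) (div_nonneg (sub_nonneg.2 hx.1) hba.le)
    (by rw [← add_div, div_eq_one_iff_eq hba.ne']; ring)
  have hcomb : ((b - x) / (b - a)) • a + ((x - a) / (b - a)) • b = x := by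
    simp only [smul_eq_mul]; field_simp; ring
  rw [hcomb, smul_eq_mul, smul_eq_mul] at h
  calc f x ≤ _ := h
    _ = _ := by field_simp; ring

theorem UpperSemicontinuousWithinAt.of_le_of_continuousWithinAt {α : Type*} [TopologicalSpace α]
    {f h : α → ℝ} {s : Set α} {x : α} (hle : ∀ y ∈ s, f y ≤ h y)
    (hh : ContinuousWithinAt h s x) (hx : h x = f x) : UpperSemicontinuousWithinAt f s x := by
  intro c hc
  rw [← hx] at hc
  filter_upwards [hh (Iio_mem_nhds hc), self_mem_nhdsWithin] with y hy hys
  exact (hle y hys).trans_lt hy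

theorem ConvexOn.continuousOn_Icc_of_lowerSemicontinuousOn {f : ℝ → ℝ} {a b : ℝ}
    (hf : ConvexOn ℝ (Icc a b) f) (hlsc : LowerSemicontinuousOn f (Icc a b)) :
    ContinuousOn f (Icc a b) := by
  rcases lt_or_ge a b with hab | hba
  · set chord : ℝ → ℝ := fun x => f a + (f b - f a) / (b - a) * (x - a)
    have hchord : Continuous chord := by fun_prop
    have hend : ∀ c ∈ Icc a b, chord c = f c → ContinuousWithinAt f (Icc a b) c :=
      fun c hc hfc => continuousWithinAt_iff_lower_upperSemicontinuousWithinAt.2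
        ⟨hlsc c hc, .of_le_of_continuousWithinAt (fun x hx => hf.le_chord hab hx)
          hchord.continuousWithinAt hfc⟩
    refine hf.continuousOn_Icc hab ((continuousWithinAt_Icc_iff_Ici hab).1 ?_)
      ((continuousWithinAt_Icc_iff_Iic hab).1 ?_)
    · exact hend a (left_mem_Icc.2 hab.le) (by simp [chord])
    · exact hend b (right_mem_Icc.2 hab.le) (by simp [chord]; field_simp; ring)
  · exact (subsingleton_Icc_of_ge hba).continuousOn f

theorem ConvexOn.add_deriv_mul_sub_le {f : ℝ → ℝ} {s : Set ℝ} {x₀ x : ℝ} (hf : ConvexOn ℝ s f)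
    (hx₀ : x₀ ∈ s) (hx : x ∈ s) (hd : DifferentiableAt ℝ f x₀) :
    f x₀ + deriv f x₀ * (x - x₀) ≤ f x := by
  rcases lt_trichotomy x x₀ with hlt | rfl | hgt
  · have h := hf.slope_le_deriv hx hx₀ hlt hd
    rw [slope_def_field, div_le_iff₀ (sub_pos.2 hlt)] at h
    linarith
  · simp
  · have h := hf.deriv_le_slope hx₀ hx hgt hd
    rw [slope_def_field, le_div_iff₀ (sub_pos.2 hgt)] at h
    linarith

theorem exists_mul_sub_lt_of_lt_deriv {f : ℝ → ℝ} {x₀ φ : ℝ} (hd : DifferentiableAt ℝ f x₀)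
    (hφ : φ < deriv f x₀) : ∃ x, φ * x₀ - f x₀ < φ * x - f x := by
  have hslope : Tendsto (slope f x₀) (𝓝[<] x₀) (𝓝 (deriv f x₀)) :=
    (hasDerivAt_iff_tendsto_slope.1 hd.hasDerivAt).mono_left
      (nhdsWithin_mono _ fun _ hx => ne_of_lt hx)
  obtain ⟨x, hxφ, hx⟩ :=
    ((hslope.eventually (eventually_gt_nhds hφ)).and self_mem_nhdsWithin).exists
  rw [slope_def_field, lt_div_iff_of_neg (sub_neg.2 hx)] at hxφ
  exact ⟨x, by linarith⟩

/-- The Fenchel conjugate `ℓ*`; where `φ x - ℓ x` is unbounded above, `⨆` gives the junk value `0`.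
-/
noncomputable def fenchelConj (ℓ : ℝ → ℝ) (φ : ℝ) : ℝ := ⨆ x : ℝ, φ * x - ℓ x

section fenchelConj

variable {ℓ : ℝ → ℝ} {φ : ℝ}

theorem le_fenchelConj (hφ : BddAbove (range fun x => φ * x - ℓ x)) (x : ℝ) :
    φ * x - ℓ x ≤ fenchelConj ℓ φ :=
  le_ciSup hφ x

theorem fenchelConj_le {c : ℝ} (h : ∀ x, φ * x - ℓ x ≤ c) : fenchelConj ℓ φ ≤ c :=
  ciSup_le h

theorem convexOn_fenchelConj {s : Set ℝ} (hs : Convex ℝ s)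
    (hbdd : ∀ φ ∈ s, BddAbove (range fun x => φ * x - ℓ x)) : ConvexOn ℝ s (fenchelConj ℓ) := by
  refine ⟨hs, fun a ha b hb t u ht hu htu => fenchelConj_le fun x => ?_⟩
  calc (t • a + u • b) * x - ℓ x = t * (a * x - ℓ x) + u * (b * x - ℓ x) := by
        simp only [smul_eq_mul]; linear_combination ℓ x * htu
    _ ≤ t * fenchelConj ℓ a + u * fenchelConj ℓ b := by
        gcongr
        · exact le_fenchelConj (hbdd a ha) x
        · exact le_fenchelConj (hbdd b hb) x

theorem lowerSemicontinuousOn_fenchelConj {s : Set ℝ}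
    (hbdd : ∀ φ ∈ s, BddAbove (range fun x => φ * x - ℓ x)) :
    LowerSemicontinuousOn (fenchelConj ℓ) s :=
  lowerSemicontinuousOn_ciSup hbdd fun x =>
    (by fun_prop : Continuous fun φ : ℝ => φ * x - ℓ x).lowerSemicontinuous.lowerSemicontinuousOn s

theorem fenchelConj_zero (hnonneg : ∀ x, 0 ≤ ℓ x) (hlim : Tendsto ℓ atBot (𝓝 0)) :
    fenchelConj ℓ 0 = 0 := by
  have hle : ∀ x, 0 * x - ℓ x ≤ 0 := fun x => by linarith [hnonneg x]
  refine le_antisymm (fenchelConj_le hle) (le_of_forall_pos_lt_add fun ε hε => ?_)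
  obtain ⟨x, hx⟩ := (hlim.eventually (eventually_lt_nhds hε)).exists
  have := le_fenchelConj ⟨0, forall_mem_range.2 hle⟩ x
  linarith

theorem fenchelConj_deriv {x₀ : ℝ} (hf : ConvexOn ℝ univ ℓ) (hd : DifferentiableAt ℝ ℓ x₀) :
    fenchelConj ℓ (deriv ℓ x₀) = deriv ℓ x₀ * x₀ - ℓ x₀ := by
  have hle : ∀ x, deriv ℓ x₀ * x - ℓ x ≤ deriv ℓ x₀ * x₀ - ℓ x₀ := fun x => by
    linarith [hf.add_deriv_mul_sub_le (mem_univ x₀) (mem_univ x) hd]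
  exact le_antisymm (fenchelConj_le hle) (le_fenchelConj ⟨_, forall_mem_range.2 hle⟩ x₀)

end fenchelConj

theorem conj_restricted_bijection_general (ℓ : ℝ → ℝ) (β : ℝ)
    (hconv : ConvexOn ℝ Set.univ ℓ)
    (hdiff : Differentiable ℝ ℓ)
    (hnonneg : ∀ x, 0 ≤ ℓ x)
    (hlim : Filter.Tendsto ℓ Filter.atBot (nhds 0))
    (hd : ∀ x, deriv ℓ x ∈ Set.Ioc (0 : ℝ) β)
    (conj : ℝ → ℝ)
    (hconj : ∀ φ, conj φ = ⨆ x : ℝ, (φ * x - ℓ x)) :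
    StrictAntiOn conj (Set.Icc 0 (deriv ℓ 0)) ∧
    Set.BijOn conj (Set.Icc 0 (deriv ℓ 0)) (Set.Icc (-(ℓ 0)) 0) := by
  obtain rfl : conj = fenchelConj ℓ := funext hconj
  set g := deriv ℓ 0
  have hbdd : ∀ φ ∈ Icc 0 g, BddAbove (range fun x => φ * x - ℓ x) := by
    refine fun φ hφ => ⟨0, forall_mem_range.2 fun x => ?_⟩
    rcases le_total 0 x with hx | hx
    · nlinarith [hconv.add_deriv_mul_sub_le (mem_univ 0) (mem_univ x) (hdiff 0), hnonneg 0,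
        mul_le_mul_of_nonneg_right hφ.2 hx]
    · nlinarith [hnonneg x, mul_nonpos_of_nonneg_of_nonpos hφ.1 hx]
  have hconvex := convexOn_fenchelConj (convex_Icc 0 g) hbdd
  have hg : fenchelConj ℓ g = -ℓ 0 := by simpa using fenchelConj_deriv hconv (hdiff 0)
  have hanti : StrictAntiOn (fenchelConj ℓ) (Icc 0 g) :=
    hconvex.strictAntiOn_Icc_of_right_lt fun φ hφ => by
      obtain ⟨x, hx⟩ := exists_mul_sub_lt_of_lt_deriv (hdiff 0) hφ.2
      simpa [hg] using hx.trans_le (le_fenchelConj (hbdd φ (Ico_subset_Icc_self hφ)) x)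
  have hcont := hconvex.continuousOn_Icc_of_lowerSemicontinuousOn
    (lowerSemicontinuousOn_fenchelConj hbdd)
  have hg0 : 0 ≤ g := (hd 0).1.le
  have hmaps := hanti.antitoneOn.mapsTo_Icc
  have hsurj := hcont.surjOn_Icc (right_mem_Icc.2 hg0) (left_mem_Icc.2 hg0)
  rw [hg, fenchelConj_zero hnonneg hlim] at hmaps hsurj
  exact ⟨hanti, hmaps, hanti.injOn, hsurj⟩

theorem conj_restricted_bijection (ℓ : ℝ → ℝ) (β : ℝ)
    (hconv : ConvexOn ℝ Set.univ ℓ)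
    (hdiff : Differentiable ℝ ℓ)
    (hnonneg : ∀ x, 0 ≤ ℓ x)
    (hlim : Filter.Tendsto ℓ Filter.atBot (nhds 0))
    (hℓ0 : 0 < ℓ 0)
    (hd : ∀ x, deriv ℓ x ∈ Set.Ioc (0 : ℝ) β)
    (conj : ℝ → ℝ)
    (hconj : ∀ φ, conj φ = ⨆ x : ℝ, (φ * x - ℓ x)) :
    StrictAntiOn conj (Set.Icc 0 (deriv ℓ 0)) ∧
    Set.BijOn conj (Set.Icc 0 (deriv ℓ 0)) (Set.Icc (-(ℓ 0)) 0) :=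
  conj_restricted_bijection_general ℓ β hconv hdiff hnonneg hlim hd conj hconj
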